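/- The family of vector fields on ℝ² given by L_n = e^{−nt+(n−1)x}(e^{x} + n)(e^{x}+1)^{−n} ∂_t + n e^{−nt+(n−1)x}(e^{x}+1)^{1−n} ∂_x (n ∈ ℤ) is a realization of the Witt algebra: [L_m, L_n] = (m−n)L_{m+n} for all m, n ∈ ℤ. (This is the realization 𝔚₅ of Theorem 1 with the '+' choice of sign, for which the coefficients are smooth on all of ℝ².) -/

import Mathlib

/-!
With `w = e^{x-t}/(e^x+1)`, `A = ∂_t` and `B = e^{-x} ∂_t + (1 + e^{-x}) ∂_x` one has
`L_n = w^n (A + n B)`. Since `A w = -w`, `B w = 0` and `[A, B] = 0`, the Leibniz rule gives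
`[w^m (A + m B), w^n (A + n B)] = w^{m+n} (m (A + m B) - n (A + n B))`, which is
`(m - n) w^{m+n} (A + (m + n) B)`.
-/

/-- Lie bracket of smooth vector fields on `ℝ²` (coordinates `(t,x)`), identified with
`C^∞` maps `ℝ² → ℝ²`: `[X,Y](p) = (DY)(p)(X(p)) - (DX)(p)(Y(p))`. -/
noncomputable def lieBracket2 (X Y : ℝ × ℝ → ℝ × ℝ) : ℝ × ℝ → ℝ × ℝ :=
  fun p => fderiv ℝ Y p (X p) - fderiv ℝ X p (Y p)

/-- The realization `𝔚₅` (with the '+' choice of sign):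
`L_n = e^{-nt+(n-1)x}(e^x + n)(e^x+1)^{-n} ∂_t + n e^{-nt+(n-1)x}(e^x+1)^{1-n} ∂_x`. -/
noncomputable def W5field (n : ℤ) : ℝ × ℝ → ℝ × ℝ := fun p =>
  (Real.exp (-(n : ℝ) * p.1 + ((n : ℝ) - 1) * p.2) * (Real.exp p.2 + (n : ℝ)) *
     (Real.exp p.2 + 1) ^ (-n),
   (n : ℝ) * Real.exp (-(n : ℝ) * p.1 + ((n : ℝ) - 1) * p.2) *
     (Real.exp p.2 + 1) ^ (1 - n))

namespace VectorField

variable {𝕜 : Type*} [NontriviallyNormedField 𝕜] {E : Type*} [NormedAddCommGroup E]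
  [NormedSpace 𝕜 E] {A B : E → E} {f : E → 𝕜} {x : E}

lemma lieBracket_add_smul_add_smul (hA : DifferentiableAt 𝕜 A x) (hB : DifferentiableAt 𝕜 B x)
    (a b : 𝕜) :
    lieBracket 𝕜 (fun y ↦ A y + a • B y) (fun y ↦ A y + b • B y) x
      = (b - a) • lieBracket 𝕜 A B x := by
  have hV (c : 𝕜) := (hA.hasFDerivAt.fun_add (hB.hasFDerivAt.fun_const_smul c)).fderiv
  simp only [lieBracket, hV, add_apply, smul_apply, map_add, map_smul]
  module

lemma fderiv_zpow_apply_of_fderiv_apply_eq_neg (hf : DifferentiableAt 𝕜 f x) (hfx : f x ≠ 0)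
    {v : E} (hv : fderiv 𝕜 f x v = -f x) (k : ℤ) :
    fderiv 𝕜 (fun y ↦ f y ^ k) x v = -(k * f x ^ k) := by
  have hfk : HasFDerivAt (fun y ↦ f y ^ k) ((k * f x ^ (k - 1)) • fderiv 𝕜 f x) x :=
    (hasDerivAt_zpow k (f x) (.inl hfx)).comp_hasFDerivAt x hf.hasFDerivAt
  rw [hfk.fderiv, smul_apply, hv, zpow_sub_one₀ hfx, smul_eq_mul]
  field_simp

def wittField (f : E → 𝕜) (A B : E → E) (n : ℤ) : E → E :=
  fun y ↦ f y ^ n • (A y + (n : 𝕜) • B y)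

theorem lieBracket_wittField (hA : DifferentiableAt 𝕜 A x) (hB : DifferentiableAt 𝕜 B x)
    (hf : DifferentiableAt 𝕜 f x) (hfx : f x ≠ 0) (hAf : fderiv 𝕜 f x (A x) = -f x)
    (hBf : fderiv 𝕜 f x (B x) = 0) (hAB : lieBracket 𝕜 A B x = 0) (m n : ℤ) :
    lieBracket 𝕜 (wittField f A B m) (wittField f A B n) x
      = ((m : 𝕜) - n) • wittField f A B (m + n) x := by
  have hfV (k : ℤ) : fderiv 𝕜 f x (A x + (k : 𝕜) • B x) = -f x := by
    rw [map_add, map_smul, hAf, hBf, smul_zero, add_zero]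
  have hV (k : ℤ) : DifferentiableAt 𝕜 (fun y ↦ A y + (k : 𝕜) • B y) x :=
    hA.add (hB.const_smul _)
  have hfk (k : ℤ) : DifferentiableAt 𝕜 (fun y ↦ f y ^ k) x := hf.zpow (.inl hfx)
  unfold wittField
  rw [lieBracket_smul_left (hfk m) (hV m), lieBracket_smul_right (hfk n) (hV n),
    lieBracket_add_smul_add_smul hA hB, hAB, map_smul,
    fderiv_zpow_apply_of_fderiv_apply_eq_neg hf hfx (hfV n),
    fderiv_zpow_apply_of_fderiv_apply_eq_neg hf hfx (hfV m), zpow_add₀ hfx]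
  push_cast
  module

end VectorField

open Real ContinuousLinearMap VectorField

noncomputable def W5weight (p : ℝ × ℝ) : ℝ := exp (p.2 - p.1) * (exp p.2 + 1)⁻¹

def W5A : ℝ × ℝ → ℝ × ℝ := fun _ ↦ (1, 0)

noncomputable def W5B (p : ℝ × ℝ) : ℝ × ℝ := (exp (-p.2), 1 + exp (-p.2))

lemma hasFDerivAt_W5weight (p : ℝ × ℝ) :
    HasFDerivAt W5weight (W5weight p • ((exp p.2 + 1)⁻¹ • snd ℝ ℝ ℝ - fst ℝ ℝ ℝ)) p := by
  have hne : exp p.2 + 1 ≠ 0 := by positivity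
  have hnum : HasFDerivAt (fun q : ℝ × ℝ ↦ exp (q.2 - q.1))
      (exp (p.2 - p.1) • (snd ℝ ℝ ℝ - fst ℝ ℝ ℝ)) p :=
    (hasFDerivAt_snd.sub hasFDerivAt_fst).exp
  have hden : HasFDerivAt (fun q : ℝ × ℝ ↦ (exp q.2 + 1)⁻¹)
      (-((exp p.2 + 1) ^ 2)⁻¹ • exp p.2 • snd ℝ ℝ ℝ) p :=
    (hasDerivAt_inv hne).comp_hasFDerivAt p (hasFDerivAt_snd.exp.add_const 1)
  refine (hnum.mul hden).congr_fderiv ?_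
  ext
  · simp [W5weight, mul_comm]
  · simp only [add_comp, smul_comp, snd_comp_inr, neg_smul, smul_neg, sub_comp, fst_comp_inr,
      sub_zero, add_apply, neg_apply, smul_apply, id_apply, smul_eq_mul, mul_one, W5weight]
    field_simp
    ring

lemma hasFDerivAt_W5B (p : ℝ × ℝ) :
    HasFDerivAt W5B ((exp (-p.2) • -snd ℝ ℝ ℝ).prod (exp (-p.2) • -snd ℝ ℝ ℝ)) p := by
  have hexp : HasFDerivAt (fun q : ℝ × ℝ ↦ exp (-q.2)) (exp (-p.2) • -snd ℝ ℝ ℝ) p :=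
    hasFDerivAt_snd.neg.exp
  exact hexp.prodMk (hexp.const_add 1)

lemma fderiv_W5weight_apply_W5A (p : ℝ × ℝ) :
    fderiv ℝ W5weight p (W5A p) = -W5weight p := by
  simp [(hasFDerivAt_W5weight p).fderiv, W5A]

lemma fderiv_W5weight_apply_W5B (p : ℝ × ℝ) :
    fderiv ℝ W5weight p (W5B p) = 0 := by
  have hne : exp p.2 + 1 ≠ 0 := by positivity
  rw [(hasFDerivAt_W5weight p).fderiv, smul_apply, smul_eq_mul, mul_eq_zero]
  right
  simp only [W5B, exp_neg, sub_apply, smul_apply, coe_snd', smul_eq_mul, coe_fst']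
  field_simp
  ring

lemma lieBracket_W5A_W5B (p : ℝ × ℝ) : lieBracket ℝ W5A W5B p = 0 := by
  unfold lieBracket W5A
  simp [(hasFDerivAt_W5B p).fderiv]

lemma W5weight_zpow (p : ℝ × ℝ) (n : ℤ) :
    W5weight p ^ n = exp (n * (p.2 - p.1)) * (exp p.2 + 1) ^ (-n) := by
  rw [W5weight, mul_zpow, inv_zpow', ← rpow_intCast, ← exp_mul, mul_comm (p.2 - p.1)]

lemma W5field_eq_wittField (n : ℤ) : W5field n = wittField W5weight W5A W5B n := by
  funext p
  have hne : exp p.2 + 1 ≠ 0 := by positivity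
  have hexp : exp (-n * p.1 + (n - 1) * p.2) = exp (n * (p.2 - p.1)) * exp (-p.2) := by
    rw [← exp_add]; ring_nf
  simp only [W5field, wittField, W5A, W5B, W5weight_zpow, hexp, zpow_sub₀ hne, zpow_one,
    zpow_neg, Prod.smul_mk, smul_eq_mul, Prod.mk_add_mk, zero_add, exp_neg, Prod.mk.injEq]
  constructor <;> field_simp

lemma lieBracket2_eq_lieBracket : lieBracket2 = lieBracket ℝ := rfl

theorem W5_realization :
    ∀ m n : ℤ, lieBracket2 (W5field m) (W5field n)
      = fun p => ((m : ℝ) - (n : ℝ)) • W5field (m + n) p := by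
  intro m n
  funext p
  have hW5weight : W5weight p ≠ 0 := by unfold W5weight; positivity
  simp only [lieBracket2_eq_lieBracket, W5field_eq_wittField]
  exact lieBracket_wittField (differentiableAt_const _)
    (hasFDerivAt_W5B p).differentiableAt (hasFDerivAt_W5weight p).differentiableAt hW5weight
    (fderiv_W5weight_apply_W5A p) (fderiv_W5weight_apply_W5B p) (lieBracket_W5A_W5B p) m n
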